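/- For every z in the open unit disk U with z ≠ 0 such that |Re((z + z⁻¹)/2)| < 1, one has 1/√2 ≤ |Im z|·(1 + |z|)/(|z|·|z² − 1|) ≤ (1 + √2)/2. -/

import Mathlib

/-!
Write `z = x + iy` and `r = ‖z‖`. The identity
`r² ‖z² - 1‖² = x² (1 - r²)² + y² (1 + r²)²` gives `|y| (1 + r²) ≤ r ‖z² - 1‖`, so the quotient is at
most `(1 + r) / (1 + r²) ≤ (1 + √2) / 2`. Since `Re ((z + z⁻¹) / 2) = x (1 + r²) / (2 r²)`, the
hypothesis on the real part says `x² (1 + r²)² < 4 r⁴`, i.e. `r² (1 - r²)² < y² (1 + r²)²`, whence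
`r² ‖z² - 1‖² = r² (1 - r²)² + 4 r² y² < y² ((1 + r²)² + 4 r²) ≤ 2 y² (1 + r)²` when `r ≤ 1`.
-/

open Metric Set

/-- `(1 + √2) / 2` is the maximum of `(1 + r) / (1 + r²)`, attained at `r = √2 - 1`. -/
theorem two_mul_one_add_le (r : ℝ) : 2 * (1 + r) ≤ (1 + √2) * (1 + r ^ 2) := by
  nlinarith [sq_nonneg ((1 + √2) * r - 1), Real.sq_sqrt (zero_le_two : (0 : ℝ) ≤ 2), Real.sqrt_nonneg 2]

namespace Complex

theorem sq_norm_eq_re_sq_add_im_sq (z : ℂ) : ‖z‖ ^ 2 = z.re ^ 2 + z.im ^ 2 := by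
  rw [Complex.sq_norm, normSq_apply]; ring

theorem sq_norm_sq_sub_one (z : ℂ) : ‖z ^ 2 - 1‖ ^ 2 = (1 - ‖z‖ ^ 2) ^ 2 + 4 * z.im ^ 2 := by
  rw [sq_norm_eq_re_sq_add_im_sq, sq_norm_eq_re_sq_add_im_sq]
  simp only [sub_re, sub_im, one_re, one_im, pow_two, mul_re, mul_im]
  ring

theorem sq_norm_mul_norm_sq_sub_one (z : ℂ) :
    (‖z‖ * ‖z ^ 2 - 1‖) ^ 2 = z.re ^ 2 * (1 - ‖z‖ ^ 2) ^ 2 + z.im ^ 2 * (1 + ‖z‖ ^ 2) ^ 2 := by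
  rw [mul_pow, sq_norm_sq_sub_one, sq_norm_eq_re_sq_add_im_sq]
  ring

theorem re_add_inv_div_two (z : ℂ) :
    ((z + z⁻¹) / 2).re = z.re * (1 + ‖z‖ ^ 2) / (2 * ‖z‖ ^ 2) := by
  rcases eq_or_ne z 0 with rfl | hz
  · simp
  have : ‖z‖ ^ 2 ≠ 0 := by positivity
  rw [div_ofNat_re, add_re, inv_re, ← Complex.sq_norm]
  field_simp
  ring

theorem abs_re_add_inv_div_two_lt_one_iff {z : ℂ} (hz : z ≠ 0) :
    |((z + z⁻¹) / 2).re| < 1 ↔ |z.re| * (1 + ‖z‖ ^ 2) < 2 * ‖z‖ ^ 2 := by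
  have : 0 < 2 * ‖z‖ ^ 2 := by positivity
  rw [re_add_inv_div_two, abs_div, abs_mul, abs_of_pos this,
    abs_of_pos (by positivity : (0 : ℝ) < 1 + ‖z‖ ^ 2), div_lt_one this]

theorem abs_im_mul_one_add_sq_norm_le (z : ℂ) : |z.im| * (1 + ‖z‖ ^ 2) ≤ ‖z‖ * ‖z ^ 2 - 1‖ := by
  refine le_of_sq_le_sq ?_ (by positivity)
  rw [sq_norm_mul_norm_sq_sub_one, mul_pow, sq_abs]
  nlinarith [mul_nonneg (sq_nonneg z.re) (sq_nonneg (1 - ‖z‖ ^ 2))]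

theorem abs_im_mul_one_add_norm_div_le (z : ℂ) :
    |z.im| * (1 + ‖z‖) / (‖z‖ * ‖z ^ 2 - 1‖) ≤ (1 + √2) / 2 := by
  refine div_le_of_le_mul₀ (by positivity) (by positivity) ?_
  calc |z.im| * (1 + ‖z‖) = |z.im| * (2 * (1 + ‖z‖)) / 2 := by ring
    _ ≤ |z.im| * ((1 + √2) * (1 + ‖z‖ ^ 2)) / 2 := by
      gcongr |z.im| * ?_ / 2
      exact two_mul_one_add_le _
    _ = (1 + √2) / 2 * (|z.im| * (1 + ‖z‖ ^ 2)) := by ring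
    _ ≤ (1 + √2) / 2 * (‖z‖ * ‖z ^ 2 - 1‖) := by
      gcongr _ * ?_
      exact abs_im_mul_one_add_sq_norm_le z

theorem norm_mul_norm_sq_sub_one_le {z : ℂ} (hz : ‖z‖ ≤ 1)
    (hre : |z.re| * (1 + ‖z‖ ^ 2) < 2 * ‖z‖ ^ 2) :
    ‖z‖ * ‖z ^ 2 - 1‖ ≤ |z.im| * (1 + ‖z‖) * √2 := by
  set r := ‖z‖
  have hre_sq : z.re ^ 2 * (1 + r ^ 2) ^ 2 < 4 * r ^ 4 := by
    have := pow_lt_pow_left₀ hre (by positivity) two_ne_zero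
    rw [mul_pow, sq_abs] at this
    linarith
  have hr_sq : r ^ 2 = z.re ^ 2 + z.im ^ 2 := sq_norm_eq_re_sq_add_im_sq z
  -- `2 (1 + r)² - (1 + r²)² - 4 r² = -(r - 1) (r³ + r² + 5 r + 1)`
  have h_quartic : (r - 1) * (r ^ 3 + r ^ 2 + 5 * r + 1) ≤ 0 :=
    mul_nonpos_of_nonpos_of_nonneg (by linarith) (by positivity)
  refine le_of_sq_le_sq ?_ (by positivity)
  rw [mul_pow, mul_pow, mul_pow, Real.sq_sqrt zero_le_two, sq_abs, sq_norm_sq_sub_one]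
  nlinarith [sq_nonneg z.im]

end Complex

/-- Estimate `1/√2 ≤ |Im z|(1+|z|)/(|z||z²−1|) ≤ (1+√2)/2` in the region where
`|Re((z+z⁻¹)/2)| < 1`. -/
theorem stmt_7 (z : ℂ) (hz : z ∈ ball (0:ℂ) 1) (hz0 : z ≠ 0)
    (hre : |((z + z⁻¹) / 2).re| < 1) :
    1 / Real.sqrt 2 ≤ |z.im| * (1 + ‖z‖) / (‖z‖ * ‖z^2 - 1‖) ∧
    |z.im| * (1 + ‖z‖) / (‖z‖ * ‖z^2 - 1‖) ≤ (1 + Real.sqrt 2) / 2 := by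
  rw [mem_ball_zero_iff] at hz
  refine ⟨?_, z.abs_im_mul_one_add_norm_div_le⟩
  have hnorm : ‖z ^ 2‖ ≠ ‖(1 : ℂ)‖ := by
    rw [norm_pow, norm_one]
    exact (pow_lt_one₀ (norm_nonneg z) hz two_ne_zero).ne
  have hz2 : z ^ 2 - 1 ≠ 0 := sub_ne_zero.mpr (ne_of_apply_ne norm hnorm)
  rw [div_le_div_iff₀ (by positivity) (by positivity), one_mul]
  exact Complex.norm_mul_norm_sq_sub_one_le hz.le
    ((Complex.abs_re_add_inv_div_two_lt_one_iff hz0).mp hre)
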